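/- arXiv:1803.03748 — 3 statements merged into one kernel-verified Lean document; each statement's English description precedes it below -/
import Mathlib

section
/- Feasibility theorem (IF direction): Let TL be a finite set of time layers partitioned among DRRs, with each DRR's layers linearly ordered, and let CO : TL → ℕ be an injective configuration order that is increasing along each DRR's layer sequence. Define the lifetime of layer t as the half-open interval [CO(t), CO(next(t))) where next(t) is the next layer in the same DRR (lifetime extends to ∞ for the last layer of a DRR). Suppose there is a backward dependence (t₁, t₂) ∈ E_LTG with CO(t₁) > CO(t₂) and disjoint lifetimes, i.e., CO(next(t₂)) < CO(t₁). Then the reconfiguration constraint graph RCG contains a directed cycle. -/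
/-- The reconfiguration constraint graph: vertices are time layers (`Sum.inl`)
and tasks (`Sum.inr`).  Edges: `E_cr` (configuration order between layers),
`E_ce` (a layer to the tasks it contains), `E_ec` (a task to the layer
immediately following its own layer in the same DRR), and `E_TG` (task
dependencies). -/
def RCGedge {TL M : Type*} (CO : TL → ℕ) (tl : M → TL) (next : TL → Option TL)
    (Etg : M → M → Prop) : (TL ⊕ M) → (TL ⊕ M) → Prop
  | Sum.inl t, Sum.inl t' => CO t < CO t'
  | Sum.inl t, Sum.inr m => tl m = t
  | Sum.inr m, Sum.inl t' => next (tl m) = some t'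
  | Sum.inr m, Sum.inr m' => Etg m m'

theorem RCGedge.transGen_inr {TL M : Type*} {CO : TL → ℕ} {tl : M → TL}
    {next : TL → Option TL} {Etg : M → M → Prop} {m m' : M}
    (h : Relation.TransGen Etg m m') :
    Relation.TransGen (RCGedge CO tl next Etg) (Sum.inr m) (Sum.inr m') :=
  h.lift Sum.inr fun _ _ => id

theorem stmt_4_general {TL M : Type*}
    (CO : TL → ℕ)
    (next : TL → Option TL)
    (tl : M → TL) (Etg : M → M → Prop)
    -- backward dependence between layers with disjoint lifetimes:
    (t₁ t₂ : TL) (m₁ m₂ : M)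
    (hm₁ : tl m₁ = t₁) (hm₂ : tl m₂ = t₂)
    (hdep : Relation.TransGen Etg m₁ m₂)
    (t₂' : TL) (ht₂' : next t₂ = some t₂') (hnol : CO t₂' < CO t₁) :
    ∃ v : TL ⊕ M, Relation.TransGen (RCGedge CO tl next Etg) v v := by
  -- the cycle t₁ → m₁ →⁺ m₂ → next t₂ → t₁
  have layer_to_task : RCGedge CO tl next Etg (Sum.inl t₁) (Sum.inr m₁) := hm₁
  have task_to_next : RCGedge CO tl next Etg (Sum.inr m₂) (Sum.inl t₂') := by
    change next (tl m₂) = some t₂'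
    rw [hm₂, ht₂']
  have next_to_layer : RCGedge CO tl next Etg (Sum.inl t₂') (Sum.inl t₁) := hnol
  exact ⟨Sum.inl t₁,
    ((RCGedge.transGen_inr hdep).head layer_to_task |>.tail task_to_next).tail next_to_layer⟩

/-- Feasibility theorem (IF direction): if there is a backward dependence
between time layers whose lifetimes are disjoint (`CO (next t₂) < CO t₁`),
then the reconfiguration constraint graph contains a directed cycle. -/
theorem stmt_4 {TL M D : Type*} [Finite TL] [Finite M]
    (CO : TL → ℕ) (hCO : Function.Injective CO)
    (drr : TL → D) (next : TL → Option TL)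
    (hnext : ∀ t t', next t = some t' →
      drr t' = drr t ∧ CO t < CO t' ∧
        ∀ t'', drr t'' = drr t → ¬ (CO t < CO t'' ∧ CO t'' < CO t'))
    (hlast : ∀ t, next t = none → ∀ t'', drr t'' = drr t → CO t'' ≤ CO t)
    (tl : M → TL) (Etg : M → M → Prop)
    (hacyc : ∀ m : M, ¬ Relation.TransGen Etg m m)
    -- backward dependence between layers with disjoint lifetimes:
    (t₁ t₂ : TL) (m₁ m₂ : M)
    (hm₁ : tl m₁ = t₁) (hm₂ : tl m₂ = t₂)
    (hdep : Relation.TransGen Etg m₁ m₂)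
    (hback : CO t₂ < CO t₁)
    (t₂' : TL) (ht₂' : next t₂ = some t₂') (hnol : CO t₂' < CO t₁) :
    ∃ v : TL ⊕ M, Relation.TransGen (RCGedge CO tl next Etg) v v :=
  stmt_4_general CO next tl Etg t₁ t₂ m₁ m₂ hm₁ hm₂ hdep t₂' ht₂' hnol
end

section
/- Feasibility theorem (ONLY IF direction): With the same setup of time layers, configuration order CO, and the reconfiguration constraint graph RCG, suppose RCG contains a directed cycle. Then there exist time layers t and t' with a backward dependence between them (some task in t depends—via the transitive closure of TG—on some task in t', with CO(t) > CO(t')) whose lifetimes do not overlap. -/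
/-- Invariant along paths of the RCG (assuming no non-overlapping backward
dependence exists): roughly, "time strictly advances"; a pending task chain,
or a path split at an intermediate layer vertex, is recorded explicitly. -/
def Pinv {TL M : Type*} (CO : TL → ℕ) (tl : M → TL) (next : TL → Option TL)
    (Etg : M → M → Prop) : (TL ⊕ M) → (TL ⊕ M) → Prop
  | Sum.inl t, Sum.inl t' => CO t < CO t'
  | Sum.inl t, Sum.inr m' => ∃ m, Relation.ReflTransGen Etg m m' ∧ CO t ≤ CO (tl m)
  | Sum.inr m, Sum.inl t' => CO (tl m) < CO t' ∨
      ∃ s, Relation.TransGen (RCGedge CO tl next Etg) (Sum.inr m) (Sum.inl s) ∧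
        Relation.TransGen (RCGedge CO tl next Etg) (Sum.inl s) (Sum.inl t')
  | Sum.inr m, Sum.inr m' => Relation.TransGen Etg m m' ∨
      ∃ s, Relation.TransGen (RCGedge CO tl next Etg) (Sum.inr m) (Sum.inl s) ∧
        Relation.TransGen (RCGedge CO tl next Etg) (Sum.inl s) (Sum.inr m')

/-- Feasibility theorem (ONLY IF direction): if the reconfiguration constraint
graph contains a directed cycle, then there is a backward dependence between
two time layers whose lifetimes do not overlap (the earlier layer `t'` is
reconfigured, `CO (next t') ≤ CO t`, before the later layer `t` is
configured). -/
theorem stmt_5 {TL M D : Type*} [Finite TL] [Finite M]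
    (CO : TL → ℕ) (hCO : Function.Injective CO)
    (drr : TL → D) (next : TL → Option TL)
    (hnext : ∀ t t', next t = some t' →
      drr t' = drr t ∧ CO t < CO t' ∧
        ∀ t'', drr t'' = drr t → ¬ (CO t < CO t'' ∧ CO t'' < CO t'))
    (hlast : ∀ t, next t = none → ∀ t'', drr t'' = drr t → CO t'' ≤ CO t)
    (tl : M → TL) (Etg : M → M → Prop)
    (hacyc : ∀ m : M, ¬ Relation.TransGen Etg m m)
    (hcycle : ∃ v : TL ⊕ M, Relation.TransGen (RCGedge CO tl next Etg) v v) :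
    ∃ (t t' : TL) (m m' : M), tl m = t ∧ tl m' = t' ∧
      Relation.TransGen Etg m m' ∧ CO t' < CO t ∧
      ∃ t'', next t' = some t'' ∧ CO t'' ≤ CO t := by
  by_contra hcon
  push_neg at hcon
  obtain ⟨v, hv⟩ := hcycle
  -- Key lemma: leaving a task chain strictly advances time past the start.
  have key : ∀ m m' s, Relation.ReflTransGen Etg m m' → next (tl m') = some s →
      CO (tl m) < CO s := by
    intro m m' s hmm hs
    rcases (Relation.reflTransGen_iff_eq_or_transGen.mp hmm) with rfl | htg
    · exact (hnext _ _ hs).2.1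
    · by_cases hlt : CO (tl m') < CO (tl m)
      · have h1 := hcon (tl m) (tl m') m m' rfl rfl htg hlt s hs
        omega
      · have h2 := (hnext _ _ hs).2.1
        omega
  have main : ∀ v w, Relation.TransGen (RCGedge CO tl next Etg) v w →
      Pinv CO tl next Etg v w := by
    intro v w h
    induction h with
    | single he =>
      rename_i b
      rcases v with t | m <;> rcases b with t' | m' <;>
        simp only [RCGedge] at he <;> simp only [Pinv]
      · exact he
      · exact ⟨m', Relation.ReflTransGen.refl, le_of_eq (by rw [he])⟩
      · exact Or.inl (key m m t' Relation.ReflTransGen.refl he)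
      · exact Or.inl (Relation.TransGen.single he)
    | tail hp he ih =>
      rename_i b c
      rcases v with t | m <;> rcases b with t' | m' <;> rcases c with s | m1 <;>
        simp only [RCGedge] at he <;> simp only [Pinv] at ih ⊢
      · exact lt_trans ih he
      · exact ⟨m1, Relation.ReflTransGen.refl, by rw [he]; omega⟩
      · obtain ⟨m0, hmm, hle⟩ := ih
        exact lt_of_le_of_lt hle (key m0 m' s hmm he)
      · obtain ⟨m0, hmm, hle⟩ := ih
        exact ⟨m0, hmm.tail he, hle⟩
      · rcases ih with hlt | ⟨s0, p1, p2⟩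
        · exact Or.inl (lt_trans hlt he)
        · exact Or.inr ⟨s0, p1, p2.tail he⟩
      · rcases ih with hlt | ⟨s0, p1, p2⟩
        · exact Or.inr ⟨t', hp, Relation.TransGen.single he⟩
        · exact Or.inr ⟨s0, p1, p2.tail he⟩
      · rcases ih with htg | ⟨s0, p1, p2⟩
        · exact Or.inl (key m m' s htg.to_reflTransGen he)
        · exact Or.inr ⟨s0, p1, p2.tail he⟩
      · rcases ih with htg | ⟨s0, p1, p2⟩
        · exact Or.inl (htg.tail he)
        · exact Or.inr ⟨s0, p1, p2.tail he⟩
  have hPvv := main v v hv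
  rcases v with t | m
  · simp only [Pinv] at hPvv
    exact absurd hPvv (lt_irrefl _)
  · simp only [Pinv] at hPvv
    rcases hPvv with htg | ⟨s, p1, p2⟩
    · exact hacyc m htg
    · have := main _ _ (p2.trans p1)
      simp only [Pinv] at this
      exact absurd this (lt_irrefl _)
end

section
/- Sequence-pair placements are overlap-free in at least one dimension: suppose each module m has width w(m) > 0 and height h(m) > 0 and coordinates x(m), y(m) satisfying: if m is 'left of' m' (precedes in both PS and QS) then x(m) + w(m) ≤ x(m'), and if m is 'below' m' then y(m) + h(m) ≤ y(m'). Then for any two distinct modules, their open rectangles (x(m), x(m)+w(m)) × (y(m), y(m)+h(m)) are disjoint. -/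
lemma ioo_disj (a b c d : ℝ) (hbc : b ≤ c) :
    Disjoint (Set.Ioo a b) (Set.Ioo c d) := by
  rw [Set.disjoint_left]
  rintro z ⟨_, h1⟩ ⟨h2, _⟩
  linarith

/-- Sequence-pair placements are overlap-free: if the coordinates satisfy the
horizontal constraint along the `left` relation and the vertical constraint
along the `below` relation derived from the sequence pair, then the open
rectangles of distinct modules are disjoint. -/
theorem stmt_19 {α : Type*} [Finite α] (ps qs : α → ℕ)
    (hps : Function.Injective ps) (hqs : Function.Injective qs)
    (w h x y : α → ℝ) (hw : ∀ m, 0 < w m) (hh : ∀ m, 0 < h m)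
    (hleft : ∀ m m', ps m < ps m' → qs m < qs m' → x m + w m ≤ x m')
    (hbelow : ∀ m m', ps m' < ps m → qs m < qs m' → y m + h m ≤ y m') :
    ∀ m m', m ≠ m' →
      Disjoint (Set.Ioo (x m) (x m + w m) ×ˢ Set.Ioo (y m) (y m + h m))
        (Set.Ioo (x m') (x m' + w m') ×ˢ Set.Ioo (y m') (y m' + h m')) := by
  intro m m' hne
  have hp : ps m ≠ ps m' := fun e => hne (hps e)
  have hq : qs m ≠ qs m' := fun e => hne (hqs e)
  rcases hp.lt_or_gt with hp | hp <;> rcases hq.lt_or_gt with hq | hq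
  · exact Set.disjoint_prod.2 (Or.inl (ioo_disj _ _ _ _ (hleft m m' hp hq)))
  · exact Set.disjoint_prod.2 (Or.inr ((ioo_disj _ _ _ _ (hbelow m' m hp hq)).symm))
  · exact Set.disjoint_prod.2 (Or.inr (ioo_disj _ _ _ _ (hbelow m m' hp hq)))
  · exact Set.disjoint_prod.2 (Or.inl ((ioo_disj _ _ _ _ (hleft m' m hp hq)).symm))
end
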